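/- arXiv:0808.1991 — 9 statements merged into one kernel-verified Lean document; each statement's English description precedes it below -/
import Mathlib

section
/- A simplicial complex K is 1-collapsible if and only if K is the clique complex of a chordal graph. -/
open Finset

variable {V : Type*} [DecidableEq V]

/-- An (abstract, finite) simplicial complex: a set system closed under taking subsets. -/
def IsComplex (K : Finset (Finset V)) : Prop :=
  ∀ σ ∈ K, ∀ τ ⊆ σ, τ ∈ K

/-- `τ` is the unique maximal face of `K` containing `σ`. -/
def IsTau (K : Finset (Finset V)) (σ τ : Finset V) : Prop :=
  σ ∈ K ∧ τ ∈ K ∧ σ ⊆ τ ∧ ∀ η ∈ K, σ ⊆ η → η ⊆ τ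

/-- `σ` is a `d`-collapsible face of `K`: `dim σ ≤ d - 1` (i.e. `σ.card ≤ d`) and `σ`
is contained in a unique maximal face of `K`. -/
def DCollFace (d : ℕ) (K : Finset (Finset V)) (σ : Finset V) : Prop :=
  σ.card ≤ d ∧ ∃ τ, IsTau K σ τ

/-- The result `K_σ` of the elementary collapse at `σ`: all faces containing `σ` are removed
(they all lie between `σ` and `τ(σ)`). -/
def collapseAt (K : Finset (Finset V)) (σ : Finset V) : Finset (Finset V) :=
  K.filter (fun η => ¬ σ ⊆ η)

/-- One elementary `d`-collapse. -/
def ElemCollapse (d : ℕ) (K K' : Finset (Finset V)) : Prop :=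
  ∃ σ, DCollFace d K σ ∧ K' = collapseAt K σ

/-- `K` `d`-collapses to `L`. -/
def CollapsesTo (d : ℕ) (K L : Finset (Finset V)) : Prop :=
  Relation.ReflTransGen (ElemCollapse d) K L

/-- `K` is `d`-collapsible. -/
def DCollapsible (d : ℕ) (K : Finset (Finset V)) : Prop :=
  CollapsesTo d K ∅

/-- `G` contains an induced cycle of length `n`. -/
def HasInducedCycle {W : Type*} (G : SimpleGraph W) (n : ℕ) : Prop :=
  ∃ f : ZMod n → W, Function.Injective f ∧
    ∀ i j : ZMod n, G.Adj (f i) (f j) ↔ (j = i + 1 ∨ i = j + 1)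

/-- A graph is chordal if it has no induced cycle of length at least 4. -/
def IsChordal {W : Type*} (G : SimpleGraph W) : Prop :=
  ∀ n : ℕ, 4 ≤ n → ¬ HasInducedCycle G n

/-!
A `1`-collapse deletes a vertex `v` together with its star, and is possible exactly when all
neighbours of `v` lie in one face, i.e. when `v` is simplicial in the `1`-skeleton and its closed
neighbourhood is a face. So a `1`-collapsible complex is flag, and its skeleton has a perfect
elimination ordering; a simplicial vertex lies on no induced cycle of length `≥ 4`, whence
chordality. Conversely, Dirac's lemma gives a simplicial vertex in every chordal graph: for
non-adjacent `a`, `b`, the boundary of the component of `b` away from the closed neighbourhood of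
`a` is a clique, as a shortest path through that component closed up by `a` would be an induced
cycle. Collapsing the clique complex at simplicial vertices one by one empties it.
-/

lemma ZMod.eq_add_one_iff_val {n : ℕ} [NeZero n] (i j : ZMod n) :
    j = i + 1 ↔ j.val = i.val + 1 ∨ (i.val + 1 = n ∧ j.val = 0) := by
  have hi := i.val_lt
  have hj := j.val_lt
  rw [← ZMod.val_injective n |>.eq_iff, ZMod.val_add, ZMod.val_one_eq_one_mod, Nat.add_mod_mod]
  rcases (show i.val + 1 ≤ n from hi).lt_or_eq with h | h
  · rw [Nat.mod_eq_of_lt h]; omega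
  · rw [h, Nat.mod_self]; omega

lemma ZMod.natCast_ne_zero_of_lt {n k : ℕ} (hk : 0 < k) (hkn : k < n) : (k : ZMod n) ≠ 0 := by
  rw [Ne, ZMod.natCast_eq_zero_iff]
  exact fun h => absurd (Nat.le_of_dvd hk h) (by omega)

section InducedCycle

variable {W : Type*} {G : SimpleGraph W}

lemma not_isClique_neighborSet_of_inducedCycle {n : ℕ} (hn : 4 ≤ n) {f : ZMod n → W}
    (hinj : Function.Injective f) (hf : ∀ i j, G.Adj (f i) (f j) ↔ (j = i + 1 ∨ i = j + 1))
    (i : ZMod n) : ¬ G.IsClique (G.neighborSet (f i)) := by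
  have hne : ∀ k : ℕ, 0 < k → k < n → (k : ZMod n) ≠ 0 := fun _ => ZMod.natCast_ne_zero_of_lt
  intro hclique
  have hprev : G.Adj (f i) (f (i - 1)) := (hf _ _).2 (Or.inr (sub_add_cancel i 1).symm)
  have hnext : G.Adj (f i) (f (i + 1)) := (hf _ _).2 (Or.inl rfl)
  have hdistinct : f (i - 1) ≠ f (i + 1) := fun h => by
    have := hinj h
    exact_mod_cast hne 2 (by norm_num) (by omega) (by linear_combination -this)
  rcases (hf _ _).1 (hclique hprev hnext hdistinct) with h | h
  · exact_mod_cast hne 1 (by norm_num) (by omega) (by linear_combination h)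
  · exact_mod_cast hne 3 (by norm_num) (by omega) (by linear_combination -h)

lemma isChordal_of_forall_isClique_neighborSet (h : ∀ v, G.IsClique (G.neighborSet v)) :
    IsChordal G := by
  rintro n hn ⟨f, hinj, hf⟩
  exact not_isClique_neighborSet_of_inducedCycle hn hinj hf 0 (h _)

lemma isChordal_of_isClique_neighborSet {G' : SimpleGraph W} (hG' : IsChordal G') {v : W}
    (hv : G.IsClique (G.neighborSet v))
    (hagree : ∀ u w, u ≠ v → w ≠ v → (G.Adj u w ↔ G'.Adj u w)) : IsChordal G := by
  rintro n hn ⟨f, hinj, hf⟩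
  by_cases hvf : ∃ i, f i = v
  · obtain ⟨i, rfl⟩ := hvf
    exact not_isClique_neighborSet_of_inducedCycle hn hinj hf i hv
  · simp only [not_exists] at hvf
    exact hG' n hn ⟨f, hinj, fun i j => (hagree _ _ (hvf i) (hvf j)).symm.trans (hf i j)⟩

lemma hasInducedCycle_of_path_apex {g : ℕ → W} {k : ℕ} {a : W} (hk : 2 ≤ k)
    (hinj : Set.InjOn g (Set.Iic k))
    (hpath : ∀ i ≤ k, ∀ j ≤ k, G.Adj (g i) (g j) ↔ (j = i + 1 ∨ i = j + 1))
    (hga : ∀ i ≤ k, g i ≠ a) (hapex : ∀ i ≤ k, G.Adj (g i) a ↔ (i = 0 ∨ i = k)) :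
    HasInducedCycle G (k + 2) := by
  let c : ℕ → W := fun t => if t ≤ k then g t else a
  refine ⟨fun i => c i.val, fun i j hij => ZMod.val_injective _ ?_, fun i j => ?_⟩
  · have hi := i.val_lt
    have hj := j.val_lt
    simp only [c] at hij
    split_ifs at hij with h1 h2 h2
    · exact hinj h1 h2 hij
    · exact absurd hij (hga _ h1)
    · exact absurd hij.symm (hga _ h2)
    · omega
  · have hi := i.val_lt
    have hj := j.val_lt
    rw [ZMod.eq_add_one_iff_val, ZMod.eq_add_one_iff_val]
    simp only [c]
    split_ifs with h1 h2 h2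
    · rw [hpath _ h1 _ h2]; omega
    · rw [hapex _ h1]; omega
    · rw [G.adj_comm, hapex _ h2]; omega
    · simp only [SimpleGraph.irrefl, false_iff]; omega

end InducedCycle

section ShortestWalk

variable {W : Type*} {G : SimpleGraph W}

@[simp]
lemma SimpleGraph.spanningCoe_induce_adj {s : Set W} {u w : W} :
    (G.induce s).spanningCoe.Adj u w ↔ G.Adj u w ∧ u ∈ s ∧ w ∈ s := by
  simp

lemma SimpleGraph.Walk.not_adj_getVert_of_length_eq_dist {x y : W} {p : G.Walk x y}
    (hp : p.length = G.dist x y) {i j : ℕ} (hij : i + 2 ≤ j) (hj : j ≤ p.length) :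
    ¬ G.Adj (p.getVert i) (p.getVert j) := fun hadj => by
  have := G.dist_le ((p.take i).append (.cons hadj (p.drop j)))
  simp only [SimpleGraph.Walk.length_append, SimpleGraph.Walk.take_length,
    SimpleGraph.Walk.length_cons, SimpleGraph.Walk.drop_length] at this
  omega

lemma SimpleGraph.Walk.getVert_mem_of_induce {s : Set W} {x y : W} (hy : y ∈ s)
    (p : (G.induce s).spanningCoe.Walk x y) (i : ℕ) : p.getVert i ∈ s := by
  rcases lt_or_ge i p.length with hi | hi
  · exact (SimpleGraph.spanningCoe_induce_adj.1 (p.adj_getVert_succ hi)).2.1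
  · rw [p.getVert_of_length_le hi]; exact hy

/-- A shortest connection through `R`, closed up by `a`, would be an induced cycle. -/
lemma IsChordal.adj_of_reachable_through {R : Set W} {a x y : W} (hG : IsChordal G)
    (haR : a ∉ R) (hR : ∀ u ∈ R, ¬ G.Adj a u) (hax : G.Adj a x) (hay : G.Adj a y) (hxy : x ≠ y)
    (hreach : (G.induce (insert x (insert y R))).spanningCoe.Reachable x y) : G.Adj x y := by
  by_contra hnxy
  obtain ⟨p, hp⟩ := hreach.exists_walk_length_eq_dist
  have hpath := p.isPath_of_length_eq_dist hp
  have hmem := p.getVert_mem_of_induce (by simp)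
  have hinterior : ∀ i, 0 < i → i < p.length → p.getVert i ∈ R := fun i hi0 hik => by
    have hx : p.getVert i ≠ x := fun h => by
      have := (hpath.getVert_eq_start_iff hik.le).1 h; omega
    have hy : p.getVert i ≠ y := fun h => by
      have := (hpath.getVert_eq_end_iff hik.le).1 h; omega
    simpa [hx, hy] using hmem i
  have hadj : ∀ i ≤ p.length, ∀ j ≤ p.length,
      G.Adj (p.getVert i) (p.getVert j) ↔ (j = i + 1 ∨ i = j + 1) := by
    intro i hi j hj
    constructor
    · intro h
      have hne : i ≠ j := by rintro rfl; exact G.irrefl h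
      by_contra hfar
      rcases (show i + 2 ≤ j ∨ j + 2 ≤ i by omega) with hij | hji
      · exact p.not_adj_getVert_of_length_eq_dist hp hij hj
          (SimpleGraph.spanningCoe_induce_adj.2 ⟨h, hmem i, hmem j⟩)
      · exact p.not_adj_getVert_of_length_eq_dist hp hji hi
          (SimpleGraph.spanningCoe_induce_adj.2 ⟨h.symm, hmem j, hmem i⟩)
    · rintro (rfl | rfl)
      · exact (SimpleGraph.spanningCoe_induce_adj.1 (p.adj_getVert_succ (by omega))).1
      · exact (SimpleGraph.spanningCoe_induce_adj.1 (p.adj_getVert_succ (by omega))).1.symm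
  have hk : 2 ≤ p.length := by
    have h0 : p.length ≠ 0 := fun h => hxy (by simpa [h] using p.getVert_length)
    have h1 : p.length ≠ 1 := fun h => hnxy (by
      have := (hadj 0 (by omega) p.length le_rfl).2 (Or.inl (by omega))
      rwa [p.getVert_zero, p.getVert_length] at this)
    omega
  refine hG _ (by omega) (hasInducedCycle_of_path_apex (a := a) hk hpath.getVert_injOn hadj ?_ ?_)
  · intro i hi h
    rcases Nat.eq_zero_or_pos i with rfl | hi0
    · exact G.ne_of_adj hax (by simpa using h.symm)
    rcases hi.lt_or_eq with hik | rfl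
    · exact haR (h ▸ hinterior i hi0 hik)
    · exact G.ne_of_adj hay (by simpa using h.symm)
  · intro i hi
    rcases Nat.eq_zero_or_pos i with rfl | hi0
    · simpa using hax.symm
    rcases hi.lt_or_eq with hik | rfl
    · simp only [G.adj_comm _ a, hR _ (hinterior i hi0 hik), false_iff]; omega
    · simpa using hay.symm

end ShortestWalk

section Simplicial

open scoped Classical

variable {W : Type*} {G : SimpleGraph W}

def IsSimplicialIn (G : SimpleGraph W) (S : Finset W) (v : W) : Prop :=
  G.IsClique (G.neighborSet v ∩ S)

lemma IsSimplicialIn.of_subset {S T : Finset W} {v : W}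
    (hv : IsSimplicialIn G T v) (hST : ∀ u ∈ S, G.Adj v u → u ∈ T) : IsSimplicialIn G S v :=
  fun _ hx _ hy => hv ⟨hx.1, hST _ hx.2 hx.1⟩ ⟨hy.1, hST _ hy.2 hy.1⟩

variable [DecidableEq W]

noncomputable def boundary (G : SimpleGraph W) (S D : Finset W) : Finset W :=
  (S \ D).filter fun u => ∃ d ∈ D, G.Adj u d

lemma mem_boundary {S D : Finset W} {u : W} :
    u ∈ boundary G S D ↔ u ∈ S ∧ u ∉ D ∧ ∃ d ∈ D, G.Adj u d := by
  simp [boundary, and_assoc]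

/-- `D` is the component of `b` in `S` minus the closed neighbourhood of `a`. -/
lemma IsChordal.exists_isClique_boundary (hG : IsChordal G) {S : Finset W}
    {a b : W} (hb : b ∈ S) (hab : a ≠ b) (hnadj : ¬ G.Adj a b) :
    ∃ D ⊆ S, b ∈ D ∧ a ∉ D ∧ a ∉ boundary G S D ∧ G.IsClique (boundary G S D : Set W) := by
  set R := S.filter fun u => u ≠ a ∧ ¬ G.Adj a u
  set D := R.filter fun u => (G.induce (R : Set W)).spanningCoe.Reachable b u
  have hR : ∀ u ∈ R, u ≠ a ∧ ¬ G.Adj a u := fun u hu => (Finset.mem_filter.1 hu).2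
  have hDR : D ⊆ R := Finset.filter_subset _ _
  have hbD : b ∈ D := by simp [D, R, hb, hab.symm, hnadj]
  have hclosed : ∀ d ∈ D, ∀ u ∈ R, G.Adj d u → u ∈ D := fun d hd u hu hdu => by
    refine Finset.mem_filter.2 ⟨hu, (Finset.mem_filter.1 hd).2.trans ?_⟩
    exact SimpleGraph.Adj.reachable (by simp [hdu, hDR hd, hu])
  have hadj_a : ∀ u ∈ boundary G S D, G.Adj a u := fun u hu => by
    obtain ⟨huS, huD, d, hd, hud⟩ := mem_boundary.1 hu
    have hua : u ≠ a := by rintro rfl; exact (hR d (hDR hd)).2 hud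
    by_contra hau
    exact huD (hclosed d hd u (by simp [R, huS, hua, hau]) hud.symm)
  refine ⟨D, hDR.trans (Finset.filter_subset _ _), hbD, fun haD => (hR a (hDR haD)).1 rfl,
    fun ha => G.irrefl (hadj_a a ha), fun x hx y hy hxy => ?_⟩
  obtain ⟨-, -, dx, hdx, hxdx⟩ := mem_boundary.1 hx
  obtain ⟨-, -, dy, hdy, hydy⟩ := mem_boundary.1 hy
  refine hG.adj_of_reachable_through (R := R) (fun ha => (hR a ha).1 rfl)
    (fun u hu => (hR u hu).2) (hadj_a x hx) (hadj_a y hy) hxy ?_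
  have hmono : (G.induce (R : Set W)).spanningCoe ≤
      (G.induce (insert x (insert y R))).spanningCoe := fun u w h => by simp_all
  have hdxdy := ((Finset.mem_filter.1 hdx).2.symm.trans (Finset.mem_filter.1 hdy).2).mono hmono
  exact (SimpleGraph.Adj.reachable (by simp [hxdx, hDR hdx])).trans
    (hdxdy.trans (SimpleGraph.Adj.reachable (by simp [hydy.symm, hDR hdy])))

/-- Dirac's lemma. With `D` as above and `N := boundary G S D`, each of `D ∪ N` and `S \ D` has a
simplicial vertex off the clique `N`; both are simplicial in `S` and they are non-adjacent, so
one of them avoids `C`. -/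
lemma IsChordal.exists_isSimplicialIn_notMem (hG : IsChordal G) (S : Finset W) :
    ∀ C : Finset W, G.IsClique (C : Set W) → ¬ S ⊆ C →
      ∃ v ∈ S, v ∉ C ∧ IsSimplicialIn G S v := by
  induction S using Finset.strongInduction with
  | _ S ih =>
  intro C hC hSC
  by_cases hS : G.IsClique (S : Set W)
  · obtain ⟨v, hvS, hvC⟩ := Finset.not_subset.1 hSC
    exact ⟨v, hvS, hvC, SimpleGraph.IsClique.subset Set.inter_subset_right hS⟩
  obtain ⟨a, ha, b, hb, hab, hnadj⟩ : ∃ a ∈ S, ∃ b ∈ S, a ≠ b ∧ ¬ G.Adj a b := by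
    simpa [SimpleGraph.IsClique, Set.Pairwise] using hS
  obtain ⟨D, hDS, hbD, haD, haN, hN⟩ := hG.exists_isClique_boundary hb hab hnadj
  set N := boundary G S D
  have hNS : N ⊆ S := fun u hu => (mem_boundary.1 hu).1
  have hDN : D ∪ N ⊂ S :=
    (Finset.ssubset_iff_of_subset (Finset.union_subset hDS hNS)).2 ⟨a, ha, by simp [haD, haN]⟩
  obtain ⟨v, hv, hvN, hvsimp⟩ := ih (D ∪ N) hDN N hN
    (fun h => (mem_boundary.1 (h (Finset.mem_union_left _ hbD))).2.1 hbD)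
  obtain ⟨w, hw, hwN, hwsimp⟩ := ih (S \ D) (Finset.sdiff_ssubset hDS ⟨b, hbD⟩) N hN
    (fun h => haN (h (Finset.mem_sdiff.2 ⟨ha, haD⟩)))
  have hvD : v ∈ D := (Finset.mem_union.1 hv).resolve_right hvN
  obtain ⟨hwS, hwD⟩ := Finset.mem_sdiff.1 hw
  have hwv : ¬ G.Adj w v := fun h => hwN (mem_boundary.2 ⟨hwS, hwD, v, hvD, h⟩)
  have hv' : IsSimplicialIn G S v := hvsimp.of_subset fun u huS hvu => by
    by_cases huD : u ∈ D
    · exact Finset.mem_union_left _ huD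
    · exact Finset.mem_union_right _ (mem_boundary.2 ⟨huS, huD, v, hvD, hvu.symm⟩)
  have hw' : IsSimplicialIn G S w := hwsimp.of_subset fun u huS hwu =>
    Finset.mem_sdiff.2 ⟨huS, fun huD => hwN (mem_boundary.2 ⟨hwS, hwD, u, huD, hwu⟩)⟩
  by_cases hvC : v ∈ C
  · refine ⟨w, hwS, fun hwC => hwv (hC hwC hvC ?_), hw'⟩
    rintro rfl; exact hwD hvD
  · exact ⟨v, hDS hvD, hvC, hv'⟩

end Simplicial

section CliqueComplex

open scoped Classical

variable {W : Type*} [DecidableEq W] {G : SimpleGraph W}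

noncomputable def cliquesIn (G : SimpleGraph W) (S : Finset W) : Finset (Finset W) :=
  S.powerset.filter fun σ => G.IsClique (σ : Set W)

lemma mem_cliquesIn {S σ : Finset W} : σ ∈ cliquesIn G S ↔ σ ⊆ S ∧ G.IsClique (σ : Set W) := by
  simp [cliquesIn]

/-- The unique maximal face containing `v` is its closed neighbourhood in `S`. -/
lemma elemCollapse_cliquesIn_erase {S : Finset W} {v : W} (hv : v ∈ S)
    (hsimp : IsSimplicialIn G S v) :
    ElemCollapse 1 (cliquesIn G S) (cliquesIn G (S.erase v)) := by
  have hvK : {v} ∈ cliquesIn G S := mem_cliquesIn.2 ⟨by simpa using hv, by simp⟩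
  refine ⟨{v}, ⟨by simp, insert v (S.filter (G.Adj v)), hvK, ?_, by simp, ?_⟩, ?_⟩
  · refine mem_cliquesIn.2 ⟨Finset.insert_subset hv (Finset.filter_subset _ _), ?_⟩
    rw [Finset.coe_insert, SimpleGraph.isClique_insert]
    refine ⟨fun x hx y hy hxy => hsimp ?_ ?_ hxy, fun u hu _ => (Finset.mem_filter.1 hu).2⟩ <;>
      simp_all [SimpleGraph.mem_neighborSet]
  · intro η hη hvη u hu
    obtain ⟨hηS, hηclique⟩ := mem_cliquesIn.1 hη
    rw [Finset.singleton_subset_iff] at hvη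
    rcases eq_or_ne u v with rfl | huv
    · exact Finset.mem_insert_self _ _
    · exact Finset.mem_insert_of_mem (Finset.mem_filter.2 ⟨hηS hu, hηclique hvη hu huv.symm⟩)
  · ext η
    simp only [collapseAt, Finset.mem_filter, mem_cliquesIn, Finset.singleton_subset_iff,
      Finset.subset_erase]
    tauto

lemma IsChordal.dCollapsible_cliquesIn (hG : IsChordal G) (S : Finset W) :
    DCollapsible 1 (cliquesIn G S) := by
  induction S using Finset.strongInduction with
  | _ S ih =>
  rcases S.eq_empty_or_nonempty with rfl | hS
  · have h0 : ∅ ∈ cliquesIn G ∅ := mem_cliquesIn.2 ⟨subset_rfl, by simp⟩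
    refine .single ⟨∅, ⟨by simp, ∅, h0, h0, subset_rfl, fun η hη _ => (mem_cliquesIn.1 hη).1⟩, ?_⟩
    ext; simp [collapseAt]
  obtain ⟨v, hv, -, hsimp⟩ := hG.exists_isSimplicialIn_notMem S ∅ (by simp)
    (by simpa [Finset.subset_empty] using hS.ne_empty)
  exact .head (elemCollapse_cliquesIn_erase hv hsimp) (ih _ (Finset.erase_ssubset hv))

end CliqueComplex

section Skeleton

variable {W : Type*} [DecidableEq W] {K : Finset (Finset W)}

def skeleton (K : Finset (Finset W)) : SimpleGraph W :=
  SimpleGraph.fromRel fun u w => ({u, w} : Finset W) ∈ K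

lemma skeleton_adj {u w : W} : (skeleton K).Adj u w ↔ u ≠ w ∧ ({u, w} : Finset W) ∈ K := by
  simp [skeleton, Finset.pair_comm]

lemma IsComplex.isClique_skeleton (hK : IsComplex K) {σ : Finset W} (hσ : σ ∈ K) :
    (skeleton K).IsClique (σ : Set W) := fun _ hu _ hw huw =>
  skeleton_adj.2 ⟨huw, hK σ hσ _ (Finset.insert_subset hu (Finset.singleton_subset_iff.2 hw))⟩

/-- The flag condition, relative to the vertices of `K`, which a collapse at a vertex removes. -/
def IsFlag (K : Finset (Finset W)) : Prop :=
  ∀ σ : Finset W, (∀ v ∈ σ, {v} ∈ K) → (skeleton K).IsClique (σ : Set W) → σ ∈ K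

lemma isComplex_collapseAt (hK : IsComplex K) (σ : Finset W) : IsComplex (collapseAt K σ) := by
  intro η hη ρ hρ
  simp only [collapseAt, Finset.mem_filter] at hη ⊢
  exact ⟨hK η hη.1 ρ hρ, fun h => hη.2 (h.trans hρ)⟩

/-- All neighbours of `v` lie in `τ`. -/
lemma IsComplex.isClique_neighborSet_skeleton (hK : IsComplex K) {σ τ : Finset W} {v : W}
    (hτ : IsTau K σ τ) (hσv : σ ⊆ {v}) :
    (skeleton K).IsClique ((skeleton K).neighborSet v) := by
  obtain ⟨-, hτK, -, hmax⟩ := hτ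
  have hmem : ∀ w, (skeleton K).Adj v w → w ∈ τ := fun w hvw =>
    hmax _ (skeleton_adj.1 hvw).2 (hσv.trans (by simp)) (by simp)
  intro x hx y hy hxy
  exact skeleton_adj.2 ⟨hxy, hK τ hτK _ (Finset.insert_subset (hmem x hx)
    (Finset.singleton_subset_iff.2 (hmem y hy)))⟩

lemma IsComplex.isFlag_of_isTau_empty (hK : IsComplex K) {τ : Finset W} (hτ : IsTau K ∅ τ) :
    IsFlag K := fun σ hσ _ =>
  hK τ hτ.2.1 σ fun v hv => Finset.singleton_subset_iff.1 (hτ.2.2.2 _ (hσ v hv) (by simp))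

lemma IsComplex.isFlag_of_isTau_singleton (hK : IsComplex K) {τ : Finset W} {v : W}
    (hτ : IsTau K {v} τ) (hflag : IsFlag (collapseAt K {v})) : IsFlag K := by
  intro σ hσ hclique
  by_cases hvσ : v ∈ σ
  · refine hK τ hτ.2.1 σ fun u hu => ?_
    rcases eq_or_ne u v with rfl | huv
    · exact hτ.2.2.1 (Finset.mem_singleton_self u)
    · exact hτ.2.2.2 _ (skeleton_adj.1 (hclique hvσ hu huv.symm)).2 (by simp) (by simp)
  · have hK' : ∀ η ∈ K, η ⊆ σ → η ∈ collapseAt K {v} := fun η hη hησ =>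
      Finset.mem_filter.2 ⟨hη, fun h => hvσ (hησ (Finset.singleton_subset_iff.1 h))⟩
    refine Finset.filter_subset _ _ (hflag σ (fun u hu => hK' _ (hσ u hu) (by simpa)) ?_)
    intro x hx y hy hxy
    obtain ⟨-, hxyK⟩ := skeleton_adj.1 (hclique hx hy hxy)
    exact skeleton_adj.2 ⟨hxy, hK' _ hxyK (Finset.insert_subset hx
      (Finset.singleton_subset_iff.2 hy))⟩

lemma skeleton_collapseAt_singleton_adj {v u w : W} (hu : u ≠ v) (hw : w ≠ v) :
    (skeleton (collapseAt K {v})).Adj u w ↔ (skeleton K).Adj u w := by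
  simp [skeleton_adj, collapseAt, hu.symm, hw.symm]

lemma IsComplex.isFlag_isChordal_of_collapsesTo_empty (hK : IsComplex K) (h0 : ∅ ∈ K)
    (hcol : CollapsesTo 1 K ∅) : IsFlag K ∧ IsChordal (skeleton K) := by
  induction hcol using Relation.ReflTransGen.head_induction_on with
  | refl => exact absurd h0 (Finset.notMem_empty _)
  | head hstep _ ih =>
    obtain ⟨σ, ⟨hcard, τ, hτ⟩, rfl⟩ := hstep
    rcases Nat.le_one_iff_eq_zero_or_eq_one.1 hcard with hσ | hσ
    · rw [Finset.card_eq_zero.1 hσ] at hτ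
      exact ⟨IsComplex.isFlag_of_isTau_empty hK hτ, isChordal_of_forall_isClique_neighborSet
        fun v => IsComplex.isClique_neighborSet_skeleton hK hτ (Finset.empty_subset {v})⟩
    · obtain ⟨v, rfl⟩ := Finset.card_eq_one.1 hσ
      obtain ⟨hflag, hchordal⟩ := ih (isComplex_collapseAt hK _) (by simp [collapseAt, h0])
      exact ⟨IsComplex.isFlag_of_isTau_singleton hK hτ hflag,
        isChordal_of_isClique_neighborSet hchordal
          (IsComplex.isClique_neighborSet_skeleton hK hτ subset_rfl)
          fun _ _ hu hw => (skeleton_collapseAt_singleton_adj hu hw).symm⟩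

end Skeleton

/-- A simplicial complex (with vertex set `V`) is `1`-collapsible iff it is the clique
complex of a chordal graph on `V`. -/
theorem stmt0 {V : Type*} [DecidableEq V] [Fintype V] (K : Finset (Finset V))
    (hK : IsComplex K) (h0 : ∅ ∈ K) (hv : ∀ v : V, {v} ∈ K) :
    DCollapsible 1 K ↔
      ∃ G : SimpleGraph V, IsChordal G ∧ ∀ σ : Finset V, σ ∈ K ↔ G.IsClique (σ : Set V) := by
  constructor
  · intro hcol
    obtain ⟨hflag, hchordal⟩ := hK.isFlag_isChordal_of_collapsesTo_empty h0 hcol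
    exact ⟨skeleton K, hchordal, fun σ =>
      ⟨hK.isClique_skeleton, hflag σ fun v _ => hv v⟩⟩
  · rintro ⟨G, hG, hKG⟩
    have hKeq : K = cliquesIn G Finset.univ := by
      ext σ
      simp [mem_cliquesIn, hKG]
    exact hKeq ▸ hG.dCollapsible_cliquesIn Finset.univ
end

section
/- Let K be a simplicial complex and let σ, σ' be two collapsible faces of dimension at most d−1 that are independent, i.e., τ(σ) ≠ τ(σ'). Then σ' is a d-collapsible face of K_σ, σ is a d-collapsible face of K_{σ'}, and (K_σ)_{σ'} = (K_{σ'})_σ, and this common complex equals K minus all faces containing σ or σ'. -/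
open Finset

variable {V : Type*} [DecidableEq V]

omit [DecidableEq V] in
lemma aux_notsub {K : Finset (Finset V)} {σ σ' τ τ' : Finset V}
    (hτ : IsTau K σ τ) (hτ' : IsTau K σ' τ') (hindep : τ ≠ τ') :
    ¬ σ ⊆ τ' := by
  intro h
  apply hindep
  apply Finset.Subset.antisymm
  · exact hτ'.2.2.2 τ hτ.2.1 (hτ'.2.2.1.trans (hτ.2.2.2 τ' hτ'.2.1 h))
  · exact hτ.2.2.2 τ' hτ'.2.1 h

lemma aux_coll {K : Finset (Finset V)} {σ σ' τ τ' : Finset V}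
    (hτ : IsTau K σ τ) (hτ' : IsTau K σ' τ') (hindep : τ ≠ τ') :
    IsTau (collapseAt K σ) σ' τ' := by
  have h1 : ¬ σ ⊆ τ' := aux_notsub hτ hτ' hindep
  refine ⟨?_, ?_, hτ'.2.2.1, ?_⟩
  · exact Finset.mem_filter.mpr ⟨hτ'.1, fun h => h1 (h.trans hτ'.2.2.1)⟩
  · exact Finset.mem_filter.mpr ⟨hτ'.2.1, h1⟩
  · intro η hη hsub
    exact hτ'.2.2.2 η (Finset.mem_filter.mp hη).1 hsub

/-- Independent collapsible faces can be collapsed in either order, with the same result. -/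
theorem stmt1 (d : ℕ) (K : Finset (Finset V)) (hK : IsComplex K)
    (σ σ' τ τ' : Finset V) (hcσ : σ.card ≤ d) (hcσ' : σ'.card ≤ d)
    (hτ : IsTau K σ τ) (hτ' : IsTau K σ' τ') (hindep : τ ≠ τ') :
    DCollFace d (collapseAt K σ) σ' ∧
    DCollFace d (collapseAt K σ') σ ∧
    collapseAt (collapseAt K σ) σ' = collapseAt (collapseAt K σ') σ ∧
    collapseAt (collapseAt K σ) σ' = K.filter (fun η => ¬ σ ⊆ η ∧ ¬ σ' ⊆ η) := by
  refine ⟨⟨hcσ', τ', aux_coll hτ hτ' hindep⟩,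
    ⟨hcσ, τ, aux_coll hτ' hτ hindep.symm⟩, ?_, ?_⟩
  · simp only [collapseAt, Finset.filter_filter]
    apply Finset.filter_congr
    intro x _
    tauto
  · simp only [collapseAt, Finset.filter_filter]
end

section
/- Let K be a simplicial complex, d an integer, σ a d-collapsible face of K, and σ' a face of K with σ ⊆ σ' and dim σ' ≤ d−1. Then σ' is a d-collapsible face of K, and K_{σ'} d-collapses to K_σ. -/
open Finset

variable {V : Type*} [DecidableEq V]

/-- If `σ` is a `d`-collapsible face and `σ' ⊇ σ` has dimension at most `d-1`, then `σ'` is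
`d`-collapsible as well and `K_{σ'}` `d`-collapses to `K_σ`. -/
theorem stmt4 (d : ℕ) (K : Finset (Finset V)) (hK : IsComplex K)
    (σ σ' : Finset V) (hσ : DCollFace d K σ) (hσ' : σ' ∈ K) (hsub : σ ⊆ σ')
    (hcard : σ'.card ≤ d) :
    DCollFace d K σ' ∧ CollapsesTo d (collapseAt K σ') (collapseAt K σ) := by
  obtain ⟨hcardσ, τ, hσK, hτK, hστ, hmax⟩ := hσ
  refine ⟨⟨hcard, τ, hσ', hτK, hmax σ' hσ' hsub, fun η hη hs => hmax η hη (hsub.trans hs)⟩, ?_⟩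
  have key : ∀ n (σ'' : Finset V), (σ'' \ σ).card = n → σ'' ∈ K → σ ⊆ σ'' → σ''.card ≤ d →
      CollapsesTo d (collapseAt K σ'') (collapseAt K σ) := by
    intro n
    induction n with
    | zero =>
      intro σ'' hn hmem hsubσ hc
      have : σ'' = σ := by
        have h1 : σ'' \ σ = ∅ := Finset.card_eq_zero.mp hn
        have h2 : σ'' ⊆ σ := fun x hx => by
          by_contra hxx
          exact absurd (Finset.mem_sdiff.mpr ⟨hx, hxx⟩) (by simp [h1])
        exact Finset.Subset.antisymm h2 hsubσ
      rw [this]; exact Relation.ReflTransGen.refl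
    | succ n ih =>
      intro σ'' hn hmem hsubσ hc
      obtain ⟨v, hv⟩ := Finset.card_pos.mp (by omega : 0 < (σ'' \ σ).card)
      obtain ⟨hvσ'', hvσ⟩ := Finset.mem_sdiff.mp hv
      set σ₁ := σ''.erase v with hσ₁def
      have hvσ₁ : v ∉ σ₁ := Finset.notMem_erase v σ''
      have hσσ₁ : σ ⊆ σ₁ := fun x hx =>
        Finset.mem_erase.mpr ⟨fun he => hvσ (he ▸ hx), hsubσ hx⟩
      have hσ₁σ'' : σ₁ ⊆ σ'' := Finset.erase_subset v σ''
      have hσ₁K : σ₁ ∈ K := hK σ'' hmem σ₁ hσ₁σ''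
      have hσ₁c : σ₁.card ≤ d := le_trans (Finset.card_le_card hσ₁σ'') hc
      have hins : insert v σ₁ = σ'' := Finset.insert_erase hvσ''
      have hnotsub : ¬ σ'' ⊆ σ₁ := fun h => hvσ₁ (h hvσ'')
      have hσ''τ : σ'' ⊆ τ := hmax σ'' hmem hsubσ
      -- the step
      have hstep : ElemCollapse d (collapseAt K σ'') (collapseAt (collapseAt K σ'') σ₁) := by
        refine ⟨σ₁, ⟨hσ₁c, τ.erase v, ?_, ?_, ?_, ?_⟩, rfl⟩
        · exact Finset.mem_filter.mpr ⟨hσ₁K, hnotsub⟩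
        · refine Finset.mem_filter.mpr ⟨hK τ hτK _ (Finset.erase_subset v τ), fun h => ?_⟩
          exact Finset.notMem_erase v τ (h hvσ'')
        · exact Finset.subset_erase.mpr ⟨hσ₁σ''.trans hσ''τ, hvσ₁⟩
        · intro η hη hsη
          obtain ⟨hηK, hησ''⟩ := Finset.mem_filter.mp hη
          refine Finset.subset_erase.mpr ⟨hmax η hηK (hσσ₁.trans hsη), fun hvη => ?_⟩
          exact hησ'' (hins ▸ Finset.insert_subset hvη hsη)
      have heq : collapseAt (collapseAt K σ'') σ₁ = collapseAt K σ₁ := by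
        ext η
        simp only [collapseAt, Finset.mem_filter]
        constructor
        · rintro ⟨⟨h1, _⟩, h3⟩; exact ⟨h1, h3⟩
        · rintro ⟨h1, h2⟩; exact ⟨⟨h1, fun h => h2 (hσ₁σ''.trans h)⟩, h2⟩
      have hcard₁ : (σ₁ \ σ).card = n := by
        have : σ₁ \ σ = (σ'' \ σ).erase v := by
          ext x
          simp only [Finset.mem_sdiff, Finset.mem_erase, hσ₁def]
          tauto
        rw [this, Finset.card_erase_of_mem hv, hn]; omega
      exact Relation.ReflTransGen.head hstep (heq ▸ ih σ₁ hcard₁ hσ₁K hσσ₁ hσ₁c)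
  exact key (σ' \ σ).card σ' rfl hσ' hsub hcard
end

section
/- Let K be a simplicial complex, K' a subcomplex of K, and L' a subcomplex of K'. Assume (1) every face η of K that contains some face of K' \ L' itself belongs to K' \ L', and (2) K' d-collapses to L'. Then L = (K \ K') ∪ L' is a simplicial complex and K d-collapses to L. -/
open Finset

variable {V : Type*} [DecidableEq V]

lemma collapseAt_isComplex {K : Finset (Finset V)} {σ : Finset V} (hK : IsComplex K) :
    IsComplex (collapseAt K σ) := by
  intro η hη ρ hρ
  simp only [collapseAt, Finset.mem_filter] at *
  exact ⟨hK η hη.1 ρ hρ, fun hs => hη.2 (hs.trans hρ)⟩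

lemma collapsesTo_subset {d : ℕ} {A B : Finset (Finset V)} (h : CollapsesTo d A B) :
    B ⊆ A := by
  induction h with
  | refl => exact subset_rfl
  | tail _ h2 ih =>
      obtain ⟨σ, _, rfl⟩ := h2
      exact (Finset.filter_subset _ _).trans ih

lemma stmt7_aux (d : ℕ) (L' : Finset (Finset V)) (hL' : IsComplex L') :
    ∀ K' : Finset (Finset V), CollapsesTo d K' L' →
    ∀ K : Finset (Finset V), IsComplex K → IsComplex K' → K' ⊆ K → L' ⊆ K' →
    (∀ η ∈ K, ∀ σ, σ ∈ K' → σ ∉ L' → σ ⊆ η → η ∈ K' ∧ η ∉ L') →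
    IsComplex ((K \ K') ∪ L') ∧ CollapsesTo d K ((K \ K') ∪ L') := by
  intro K' hcoll
  induction hcoll using Relation.ReflTransGen.head_induction_on with
  | refl =>
      intro K hK _ hsub1 _ _
      rw [Finset.sdiff_union_of_subset hsub1]
      exact ⟨hK, Relation.ReflTransGen.refl⟩
  | head h1 h2 IH =>
      rename_i K' K''
      intro K hK hK' hsub1 hsub2 hclosed
      obtain ⟨σ, ⟨hcard, τ, hσK', hτK', hστ, hmax⟩, hK''⟩ := h1
      have hL'K'' : L' ⊆ K'' := collapsesTo_subset h2
      have hσL' : σ ∉ L' := by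
        intro hc
        have : σ ∈ K'' := hL'K'' hc
        rw [hK''] at this
        simp only [collapseAt, Finset.mem_filter] at this
        exact this.2 subset_rfl
      have hη : ∀ η ∈ K, σ ⊆ η → η ∈ K' ∧ η ∉ L' :=
        fun η hηK hs => hclosed η hηK σ hσK' hσL' hs
      have hK''c : IsComplex K'' := hK'' ▸ collapseAt_isComplex hK'
      have hdiff : collapseAt K σ \ K'' = K \ K' := by
        ext η
        simp only [Finset.mem_sdiff, hK'', collapseAt, Finset.mem_filter]
        constructor
        · rintro ⟨⟨h1', h2'⟩, h3'⟩
          exact ⟨h1', fun hK'η => h3' ⟨hK'η, h2'⟩⟩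
        · rintro ⟨h1', h2'⟩
          have hns : ¬ σ ⊆ η := fun hs => h2' (hη η h1' hs).1
          exact ⟨⟨h1', hns⟩, fun h => h2' h.1⟩
      have hsub1' : K'' ⊆ collapseAt K σ := by
        intro η hηK''
        rw [hK''] at hηK''
        simp only [collapseAt, Finset.mem_filter] at *
        exact ⟨hsub1 hηK''.1, hηK''.2⟩
      have hclosed' : ∀ η ∈ collapseAt K σ, ∀ ρ, ρ ∈ K'' → ρ ∉ L' → ρ ⊆ η →
          η ∈ K'' ∧ η ∉ L' := by
        intro η hηc ρ hρ hρL' hρη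
        simp only [collapseAt, Finset.mem_filter] at hηc
        rw [hK''] at hρ
        simp only [collapseAt, Finset.mem_filter] at hρ
        have := hclosed η hηc.1 ρ hρ.1 hρL' hρη
        rw [hK'']
        simp only [collapseAt, Finset.mem_filter]
        exact ⟨⟨this.1, hηc.2⟩, this.2⟩
      obtain ⟨hc1, hc2⟩ := IH (collapseAt K σ) (collapseAt_isComplex hK) hK''c
        hsub1' hL'K'' hclosed'
      rw [hdiff] at hc1 hc2
      refine ⟨hc1, Relation.ReflTransGen.head ⟨σ, ⟨hcard, τ, ?_⟩, rfl⟩ hc2⟩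
      exact ⟨hsub1 hσK', hsub1 hτK', hστ,
        fun η hηK hs => hmax η (hη η hηK hs).1 hs⟩

/-- Collapsing a subcomplex: if every face of `K` containing a face of `K' \ L'` lies in
`K' \ L'`, and `K'` `d`-collapses to `L'`, then `L = (K \ K') ∪ L'` is a complex and `K`
`d`-collapses to `L`. -/
theorem stmt7 (d : ℕ) (K K' L' : Finset (Finset V))
    (hK : IsComplex K) (hK' : IsComplex K') (hL' : IsComplex L')
    (hsub1 : K' ⊆ K) (hsub2 : L' ⊆ K')
    (hclosed : ∀ η ∈ K, ∀ σ, σ ∈ K' → σ ∉ L' → σ ⊆ η → η ∈ K' ∧ η ∉ L')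
    (hcoll : CollapsesTo d K' L') :
    IsComplex ((K \ K') ∪ L') ∧ CollapsesTo d K ((K \ K') ∪ L') := by
  exact stmt7_aux d L' hL' K' hcoll K hK hK' hsub1 hsub2 hclosed
end

section
/- Let ω and η be two distant faces of a simplicial complex K (every vertex of ω has graph distance at least 3 in the 1-skeleton of K from every vertex of η), and let L be a subcomplex of K with ω, η ∈ L. If K d-collapses to L, then the quotient complex K(ω = η), obtained by identifying the vertices of ω with those of η via a fixed bijection, d-collapses to L(ω = η). -/
open Finset

variable {V : Type*} [DecidableEq V]

lemma subset_of_collapsesTo {V : Type*} [DecidableEq V] {d : ℕ} {A B : Finset (Finset V)}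
    (h : CollapsesTo d A B) : B ⊆ A := by
  induction h with
  | refl => exact Finset.Subset.refl _
  | tail _ h' ih =>
    obtain ⟨σ, _, rfl⟩ := h'
    exact (Finset.filter_subset _ _).trans ih

lemma isComplex_collapseAt_s9 {V : Type*} [DecidableEq V] {M : Finset (Finset V)} (σ : Finset V)
    (hM : IsComplex M) : IsComplex (collapseAt M σ) := by
  intro β hβ τ hτ
  rw [collapseAt, Finset.mem_filter] at hβ ⊢
  exact ⟨hM β hβ.1 τ hτ, fun hs => hβ.2 (hs.trans hτ)⟩

/-- Gluing two distant faces `ω` and `η` of `K` (via a map `g` fixing everything outside `η`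
and sending `η` bijectively onto `ω`) preserves a `d`-collapsing of `K` to `L`. -/
theorem stmt9 (d : ℕ) (K L : Finset (Finset V))
    (hK : IsComplex K) (hL : IsComplex L) (hsub : L ⊆ K)
    (ω η : Finset V) (hω : ω ∈ L) (hη : η ∈ L)
    (hdist : ∀ u ∈ ω, ∀ v ∈ η, u ≠ v ∧ ({u, v} : Finset V) ∉ K ∧
      ¬ ∃ w : V, w ≠ u ∧ w ≠ v ∧ ({u, w} : Finset V) ∈ K ∧ ({w, v} : Finset V) ∈ K)
    (g : V → V) (hgfix : ∀ v, v ∉ η → g v = v) (hgbij : Set.BijOn g ↑η ↑ω)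
    (hcoll : CollapsesTo d K L) :
    CollapsesTo d (K.image (Finset.image g)) (L.image (Finset.image g)) := by
  -- no face of `K` contains both a vertex of `ω` and a vertex of `η`
  have hboth : ∀ β ∈ K, ∀ u ∈ β, ∀ v ∈ β, u ∈ ω → v ∈ η → False := by
    intro β hβ u hu v hv huω hvη
    exact (hdist u huω v hvη).2.1 (hK β hβ {u, v} (by
      intro x hx
      rcases Finset.mem_insert.mp hx with rfl | hx
      · exact hu
      · rw [Finset.mem_singleton] at hx; subst hx; exact hv))
  have hpath : ∀ u ∈ ω, ∀ v ∈ η, ∀ w, w ≠ u → w ≠ v →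
      ({u, w} : Finset V) ∈ K → ({w, v} : Finset V) ∈ K → False := by
    intro u hu v hv w hwu hwv h1 h2
    exact (hdist u hu v hv).2.2 ⟨w, hwu, hwv, h1, h2⟩
  have hpair : ∀ β ∈ K, ∀ a ∈ β, ∀ b ∈ β, ({a, b} : Finset V) ∈ K := by
    intro β hβ a ha b hb
    refine hK β hβ {a, b} ?_
    intro x hx
    rcases Finset.mem_insert.mp hx with rfl | hx
    · exact ha
    · rw [Finset.mem_singleton] at hx; subst hx; exact hb
  -- g is injective on every face of K
  have hinj : ∀ β ∈ K, ∀ a ∈ β, ∀ b ∈ β, g a = g b → a = b := by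
    intro β hβ a ha b hb hab
    by_cases haη : a ∈ η <;> by_cases hbη : b ∈ η
    · exact hgbij.2.1 haη hbη hab
    · exfalso
      rw [hgfix b hbη] at hab
      have : b ∈ ω := hab ▸ hgbij.1 haη
      exact hboth β hβ b hb a ha this haη
    · exfalso
      rw [hgfix a haη] at hab
      have : a ∈ ω := hab.symm ▸ hgbij.1 hbη
      exact hboth β hβ a ha b hb this hbη
    · rw [hgfix a haη, hgfix b hbη] at hab; exact hab
  -- the crucial lemma: for a face σ not inside ω nor η, images detect containment
  have hkey : ∀ σ ∈ K, ∀ α ∈ K, ¬ σ ⊆ ω → ¬ σ ⊆ η →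
      σ.image g ⊆ α.image g → σ ⊆ α := by
    intro σ hσ α hα hσω hση hss x hx
    by_cases hαη : ∃ y ∈ α, y ∈ η
    · -- α meets η, hence α misses ω
      obtain ⟨y₀, hy₀α, hy₀η⟩ := hαη
      have haω : ∀ w ∈ α, w ∉ ω := fun w hw hwω => hboth α hα w hw y₀ hy₀α hwω hy₀η
      by_cases hxη : x ∈ η
      · -- g x ∈ ω; its preimage in α must be in η, injectivity on η concludes
        have : g x ∈ α.image g := hss (Finset.mem_image_of_mem g hx)
        obtain ⟨y, hyα, hy⟩ := Finset.mem_image.mp this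
        by_cases hyη : y ∈ η
        · have : x = y := hgbij.2.1 hxη hyη hy.symm
          exact this ▸ hyα
        · exfalso
          rw [hgfix y hyη] at hy
          exact haω y hyα (hy ▸ hgbij.1 hxη)
      · have hgx : g x = x := hgfix x hxη
        have : g x ∈ α.image g := hss (Finset.mem_image_of_mem g hx)
        obtain ⟨y, hyα, hy⟩ := Finset.mem_image.mp this
        by_cases hyη : y ∈ η
        · -- then x ∈ ω, so σ misses η, pick z ∈ σ \ ω : common neighbour, contradiction
          exfalso
          have hxω : x ∈ ω := by rw [hgx] at hy; exact hy ▸ hgbij.1 hyη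
          have hσmη : ∀ v ∈ σ, v ∉ η := fun v hv hvη => hboth σ hσ x hx v hv hxω hvη
          obtain ⟨z, hzσ, hzω⟩ := Finset.not_subset.mp hσω
          have hzη : z ∉ η := hσmη z hzσ
          have hzα : z ∈ α := by
            have : g z ∈ α.image g := hss (Finset.mem_image_of_mem g hzσ)
            obtain ⟨y', hy'α, hy'⟩ := Finset.mem_image.mp this
            rw [hgfix z hzη] at hy'
            by_cases hy'η : y' ∈ η
            · exact absurd (hy' ▸ hgbij.1 hy'η) hzω
            · rw [hgfix y' hy'η] at hy'; exact hy' ▸ hy'α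
          exact hpath x hxω y hyη z (fun h => hzω (h ▸ hxω)) (fun h => hzη (h ▸ hyη))
            (hpair σ hσ x hx z hzσ) (hpair α hα z hzα y hyα)
        · rw [hgfix y hyη] at hy
          rw [hgx] at hy
          exact hy ▸ hyα
    · -- α misses η, hence α.image g = α
      push_neg at hαη
      have hgα : α.image g = α := by
        rw [show α.image g = α.image id from Finset.image_congr
          (fun a ha => hgfix a (hαη a ha)), Finset.image_id]
      by_cases hxη : x ∈ η
      · -- contradiction via a vertex z ∈ σ \ η
        exfalso
        have hgxω : g x ∈ ω := hgbij.1 hxη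
        have hgxα : g x ∈ α := by
          rw [← hgα]; exact hss (Finset.mem_image_of_mem g hx)
        obtain ⟨z, hzσ, hzη⟩ := Finset.not_subset.mp hση
        have hzω : z ∉ ω := fun h => hboth σ hσ z hzσ x hx h hxη
        have hzα : z ∈ α := by
          rw [← hgα]
          have := hss (Finset.mem_image_of_mem g hzσ)
          rwa [hgfix z hzη] at this
        exact hpath (g x) hgxω x hxη z (fun h => hzω (h ▸ hgxω)) (fun h => hzη (h ▸ hxη))
          (hpair α hα (g x) hgxα z hzα) (hpair σ hσ z hzσ x hx)
      · have : g x ∈ α := by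
          rw [← hgα]; exact hss (Finset.mem_image_of_mem g hx)
        rwa [hgfix x hxη] at this
  -- main induction on the collapsing sequence
  have main : ∀ M, CollapsesTo d M L → M ⊆ K → IsComplex M →
      CollapsesTo d (M.image (Finset.image g)) (L.image (Finset.image g)) := by
    intro M h
    induction h using Relation.ReflTransGen.head_induction_on with
    | refl => intro _ _; exact Relation.ReflTransGen.refl
    | head h' h ih =>
      intro hMK hMc
      rename_i M0 M1
      obtain ⟨σ, ⟨hcard, τ, hστ⟩, rfl⟩ := h'
      have hLsub := subset_of_collapsesTo h
      have hσM : σ ∈ M0 := hστ.1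
      have hσK : σ ∈ K := hMK hσM
      have hσω : ¬ σ ⊆ ω := by
        have := hLsub hω
        rw [collapseAt, Finset.mem_filter] at this
        exact this.2
      have hση : ¬ σ ⊆ η := by
        have := hLsub hη
        rw [collapseAt, Finset.mem_filter] at this
        exact this.2
      have hkey' : ∀ α ∈ M0, σ.image g ⊆ α.image g → σ ⊆ α :=
        fun α hα => hkey σ hσK α (hMK hα) hσω hση
      refine Relation.ReflTransGen.head ⟨σ.image g, ⟨?_, τ.image g, ?_, ?_, ?_, ?_⟩, ?_⟩
        (ih ((Finset.filter_subset _ _).trans hMK) (isComplex_collapseAt_s9 σ hMc))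
      · rw [Finset.card_image_of_injOn (fun a ha b hb => hinj σ hσK a ha b hb)]
        exact hcard
      · exact Finset.mem_image_of_mem _ hσM
      · exact Finset.mem_image_of_mem _ hστ.2.1
      · exact Finset.image_subset_image hστ.2.2.1
      · intro ρ hρ hsρ
        obtain ⟨α, hαM, rfl⟩ := Finset.mem_image.mp hρ
        exact Finset.image_subset_image (hστ.2.2.2 α hαM (hkey' α hαM hsρ))
      · ext β
        simp only [collapseAt, Finset.mem_image, Finset.mem_filter]
        constructor
        · rintro ⟨α, ⟨hαM, hσα⟩, rfl⟩
          exact ⟨⟨α, hαM, rfl⟩, fun hc => hσα (hkey' α hαM hc)⟩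
        · rintro ⟨⟨α, hαM, rfl⟩, hc⟩
          exact ⟨α, ⟨hαM, fun hs => hc (Finset.image_subset_image hs)⟩, rfl⟩
  exact main K hcoll (Finset.Subset.refl _) hK
end

section
/- Let S be a set of size 2d with d ≥ 1, partitioned as S = {p, q_1, …, q_{d−1}} ∪ {r_1, …, r_d}, and let ι = {p, q_1, …, q_{d−1}}. Define R = {σ ⊆ S : if {q_1,…,q_{d−1}} ⊆ σ then σ ⊆ ι}. Then the full simplex 2^S d-collapses to R by collapsing the liberation faces λ_i = {q_1,…,q_{d−1}, r_i}, i = 1,…,d, in any order. -/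
open Finset

variable {V : Type*} [DecidableEq V]

/-- Result of successively collapsing the faces in the list `L`. -/
def collapseList (K : Finset (Finset V)) (L : List (Finset V)) : Finset (Finset V) :=
  L.foldl collapseAt K

/-- `L` is a valid sequence of elementary `d`-collapses starting at `K`. -/
def IsCollapseSeq (d : ℕ) (K : Finset (Finset V)) (L : List (Finset V)) : Prop :=
  ∀ (i : ℕ) (h : i < L.length), DCollFace d (collapseList K (L.take i)) (L.get ⟨i, h⟩)

/-! Collapsing `λ_r = β ∪ {r}` removes exactly the faces containing `β` and `r`, so after the
liberation faces of the vertices in `T` have been collapsed, the complex is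
`{η ⊆ S : β ⊆ η → η ∩ T = ∅}`. In it, the unique maximal face above `β ∪ {r}`, `r ∉ T`, is `S \ T`,
which makes the next collapse legal; once `T = ρ`, this complex is `R` since `S = ι ∪ ρ`. -/

lemma collapseList_eq_filter (K : Finset (Finset V)) (L : List (Finset V)) :
    collapseList K L = K.filter (fun η => ∀ σ ∈ L, ¬ σ ⊆ η) := by
  induction L generalizing K with
  | nil => simp [collapseList]
  | cons σ L ih =>
    change collapseList (collapseAt K σ) L = _
    rw [ih, collapseAt, filter_filter]
    exact filter_congr fun η _ => by simp only [List.forall_mem_cons]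

lemma collapsesTo_collapseList {d : ℕ} {K : Finset (Finset V)} {L : List (Finset V)}
    (h : IsCollapseSeq d K L) : CollapsesTo d K (collapseList K L) := by
  induction L generalizing K with
  | nil => exact Relation.ReflTransGen.refl
  | cons σ L ih =>
    have hhead : DCollFace d K σ := by simpa [collapseList] using h 0 (by simp)
    have htail : IsCollapseSeq d (collapseAt K σ) L := fun i hi => by
      simpa [collapseList, List.take_succ_cons] using h (i + 1) (by simpa using hi)
    exact Relation.ReflTransGen.head ⟨σ, hhead, rfl⟩ (ih htail)

lemma forall_not_insert_subset_iff {β η T : Finset V} :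
    (∀ x ∈ T, ¬ insert x β ⊆ η) ↔ (β ⊆ η → Disjoint T η) := by
  simp only [insert_subset_iff, disjoint_left]
  tauto

lemma collapseList_powerset_map_insert (S β : Finset V) (M : List V) :
    collapseList S.powerset (M.map (insert · β))
      = S.powerset.filter (fun η => β ⊆ η → Disjoint M.toFinset η) := by
  rw [collapseList_eq_filter]
  refine filter_congr fun η _ => ?_
  rw [← forall_not_insert_subset_iff]
  simp

lemma isTau_insert_sdiff {S β T : Finset V} {r : V} (hβS : β ⊆ S) (hrS : r ∈ S)
    (hrT : r ∉ T) (hβT : Disjoint β T) :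
    IsTau (S.powerset.filter (fun η => β ⊆ η → Disjoint T η)) (insert r β) (S \ T) := by
  have hsub : insert r β ⊆ S \ T :=
    insert_subset (mem_sdiff.2 ⟨hrS, hrT⟩) (subset_sdiff.2 ⟨hβS, hβT⟩)
  refine ⟨?_, ?_, hsub, ?_⟩
  · exact mem_filter.2 ⟨mem_powerset.2 (hsub.trans sdiff_subset),
      fun _ => disjoint_of_subset_right hsub disjoint_sdiff⟩
  · exact mem_filter.2 ⟨mem_powerset.2 sdiff_subset, fun _ => disjoint_sdiff⟩
  · intro η hη hrβη
    obtain ⟨hηS, hηT⟩ := mem_filter.1 hη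
    exact subset_sdiff.2
      ⟨mem_powerset.1 hηS, (hηT ((subset_insert r β).trans hrβη)).symm⟩

lemma isCollapseSeq_powerset_map_insert {d : ℕ} {S β : Finset V} {M : List V}
    (hβS : β ⊆ S) (hcard : β.card + 1 ≤ d) (hM : M.Nodup) (hMS : ∀ r ∈ M, r ∈ S)
    (hMβ : ∀ r ∈ M, r ∉ β) :
    IsCollapseSeq d S.powerset (M.map (insert · β)) := by
  intro i hi
  have hi' : i < M.length := by simpa using hi
  have hr : M[i] ∉ M.take i := by
    rw [List.mem_take_iff_idxOf_lt (List.getElem_mem hi'), hM.idxOf_getElem]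
    exact lt_irrefl i
  have hβT : Disjoint β (M.take i).toFinset := disjoint_right.2 fun x hx =>
    hMβ x (List.mem_of_mem_take (List.mem_toFinset.1 hx))
  rw [List.get_eq_getElem, List.getElem_map, ← List.map_take,
    collapseList_powerset_map_insert]
  exact ⟨(card_insert_le _ _).trans hcard, _,
    isTau_insert_sdiff hβS (hMS _ (List.getElem_mem hi')) (mt List.mem_toFinset.1 hr) hβT⟩

theorem stmt10_general (d : ℕ) (ι ρ : Finset V)
    (hι : ι.card = d) (hdisj : Disjoint ι ρ) (p : V) (hp : p ∈ ι)
    (Lr : List V) (hnodup : Lr.Nodup) (henum : Lr.toFinset = ρ) :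
    IsCollapseSeq d ((ι ∪ ρ).powerset) (Lr.map (fun r => insert r (ι.erase p))) ∧
    collapseList ((ι ∪ ρ).powerset) (Lr.map (fun r => insert r (ι.erase p)))
      = ((ι ∪ ρ).powerset).filter (fun σ => ι.erase p ⊆ σ → σ ⊆ ι) ∧
    CollapsesTo d ((ι ∪ ρ).powerset)
      (((ι ∪ ρ).powerset).filter (fun σ => ι.erase p ⊆ σ → σ ⊆ ι)) := by
  have hLr : ∀ r ∈ Lr, r ∈ ρ := fun r hr => henum ▸ List.mem_toFinset.2 hr
  have hseq : IsCollapseSeq d ((ι ∪ ρ).powerset) (Lr.map (insert · (ι.erase p))) :=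
    isCollapseSeq_powerset_map_insert ((erase_subset p ι).trans subset_union_left)
      (by rw [card_erase_add_one hp, hι]) hnodup
      (fun r hr => mem_union_right ι (hLr r hr))
      (fun r hr hrβ => disjoint_left.1 hdisj (mem_of_mem_erase hrβ) (hLr r hr))
  have hfinal : collapseList ((ι ∪ ρ).powerset) (Lr.map (insert · (ι.erase p)))
      = ((ι ∪ ρ).powerset).filter (fun σ => ι.erase p ⊆ σ → σ ⊆ ι) := by
    rw [collapseList_powerset_map_insert, henum]
    refine filter_congr fun η hη => imp_congr_right fun _ => ?_
    exact ⟨fun h => Disjoint.left_le_of_le_sup_right (mem_powerset.1 hη) h.symm,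
      fun h => (hdisj.mono_left h).symm⟩
  exact ⟨hseq, hfinal, hfinal ▸ collapsesTo_collapseList hseq⟩

/-- Let `S = ι ∪ ρ` where `ι = {p, q_1, …, q_{d-1}}` and `ρ = {r_1, …, r_d}` are disjoint
`d`-element sets, and let `β = ι \ {p} = {q_1, …, q_{d-1}}`. Set
`R = {σ ⊆ S : β ⊆ σ → σ ⊆ ι}`. Then the full simplex `2^S` `d`-collapses to `R` by
collapsing the liberation faces `λ_r = β ∪ {r}`, `r ∈ ρ`, in any order. -/
theorem stmt10 (d : ℕ) (hd : 1 ≤ d) (ι ρ : Finset V)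
    (hι : ι.card = d) (hρ : ρ.card = d) (hdisj : Disjoint ι ρ) (p : V) (hp : p ∈ ι)
    (Lr : List V) (hnodup : Lr.Nodup) (henum : Lr.toFinset = ρ) :
    IsCollapseSeq d ((ι ∪ ρ).powerset) (Lr.map (fun r => insert r (ι.erase p))) ∧
    collapseList ((ι ∪ ρ).powerset) (Lr.map (fun r => insert r (ι.erase p)))
      = ((ι ∪ ρ).powerset).filter (fun σ => ι.erase p ⊆ σ → σ ⊆ ι) ∧
    CollapsesTo d ((ι ∪ ρ).powerset)
      (((ι ∪ ρ).powerset).filter (fun σ => ι.erase p ⊆ σ → σ ⊆ ι)) :=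
  stmt10_general d ι ρ hι hdisj p hp Lr hnodup henum
end

section
/- With S, ι, and R as in the construction (|S| = 2d, ι = {p, q_1,…,q_{d−1}}, R = {σ ⊆ S : {q_1,…,q_{d−1}} ⊆ σ implies σ ⊆ ι}), the face ι is a maximal face of R, and the complex R \ {ι} is d-collapsible. -/
open Finset

variable {V : Type*} [DecidableEq V]

lemma aux_collapse (d : ℕ) (S : Finset V) :
    ∀ A : Finset V, A ⊆ S → A.card ≤ d →
      DCollapsible d (S.powerset.filter (fun σ => ¬ A ⊆ σ)) := by
  intro A
  induction A using Finset.strongInduction with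
  | _ A ih =>
    intro hAS hAd
    rcases A.eq_empty_or_nonempty with rfl | ⟨q, hq⟩
    · have h0 : S.powerset.filter (fun σ => ¬ (∅ : Finset V) ⊆ σ) = ∅ := by
        simp
      rw [h0]
      exact Relation.ReflTransGen.refl
    · have hA'S : A.erase q ⊆ S := (erase_subset q A).trans hAS
      have hA'ss : A.erase q ⊂ A := erase_ssubset hq
      have hkey : ∀ η : Finset V, A.erase q ⊆ η → q ∈ η → A ⊆ η := by
        intro η h1 h2
        intro x hx
        rcases eq_or_ne x q with rfl | hxq
        · exact h2
        · exact h1 (mem_erase.mpr ⟨hxq, hx⟩)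
      have hstep : ElemCollapse d (S.powerset.filter (fun σ => ¬ A ⊆ σ))
          (S.powerset.filter (fun σ => ¬ A.erase q ⊆ σ)) := by
        refine ⟨A.erase q, ⟨le_trans (le_of_lt (card_erase_lt_of_mem hq)) hAd,
          S.erase q, ?_, ?_, ?_, ?_⟩, ?_⟩
        · simp only [mem_filter, mem_powerset]
          exact ⟨hA'S, fun h => (mem_erase.mp (h hq)).1 rfl⟩
        · simp only [mem_filter, mem_powerset]
          refine ⟨erase_subset q S, fun h => ?_⟩
          exact (mem_erase.mp (h hq)).1 rfl
        · exact fun x hx => mem_erase.mpr ⟨(mem_erase.mp hx).1, hA'S hx⟩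
        · intro η hη hAη
          simp only [mem_filter, mem_powerset] at hη
          refine subset_erase.mpr ⟨hη.1, fun hqη => hη.2 (hkey η hAη hqη)⟩
        · unfold collapseAt
          rw [Finset.filter_filter]
          apply Finset.filter_congr
          intro σ _
          constructor
          · exact fun h => ⟨fun hA => h ((erase_subset q A).trans hA), h⟩
          · exact fun h => h.2
      exact Relation.ReflTransGen.head hstep
        (ih (A.erase q) hA'ss hA'S (le_trans (le_of_lt (card_erase_lt_of_mem hq)) hAd))

/-- With `S = ι ∪ ρ`, `β = ι \ {p}` and `R = {σ ⊆ S : β ⊆ σ → σ ⊆ ι}` as in the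
construction, `ι` is a maximal face of `R` and `R \ {ι}` is `d`-collapsible. -/
theorem stmt11 (d : ℕ) (hd : 1 ≤ d) (ι ρ : Finset V)
    (hι : ι.card = d) (hρ : ρ.card = d) (hdisj : Disjoint ι ρ) (p : V) (hp : p ∈ ι) :
    (ι ∈ ((ι ∪ ρ).powerset).filter (fun σ => ι.erase p ⊆ σ → σ ⊆ ι) ∧
      ∀ η ∈ ((ι ∪ ρ).powerset).filter (fun σ => ι.erase p ⊆ σ → σ ⊆ ι), ι ⊆ η → η = ι) ∧
    DCollapsible d ((((ι ∪ ρ).powerset).filter (fun σ => ι.erase p ⊆ σ → σ ⊆ ι)).erase ι) := by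
  set S := ι ∪ ρ with hS
  set β := ι.erase p with hβ
  have hβι : β ⊆ ι := erase_subset p ι
  have hιS : ι ⊆ S := subset_union_left
  have hβne : β ≠ ι := by
    intro h
    exact (mem_erase.mp (h ▸ hp)).1 rfl
  have hιmem : ι ∈ ((ι ∪ ρ).powerset).filter (fun σ => ι.erase p ⊆ σ → σ ⊆ ι) := by
    simp only [mem_filter, mem_powerset]
    exact ⟨hιS, fun _ => Subset.rfl⟩
  have hmax : ∀ η ∈ ((ι ∪ ρ).powerset).filter (fun σ => ι.erase p ⊆ σ → σ ⊆ ι),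
      ι ⊆ η → η = ι := by
    intro η hη hιη
    simp only [mem_filter, mem_powerset] at hη
    exact Subset.antisymm (hη.2 (hβι.trans hιη)) hιη
  refine ⟨⟨hιmem, hmax⟩, ?_⟩
  have hstep : ElemCollapse d
      ((((ι ∪ ρ).powerset).filter (fun σ => ι.erase p ⊆ σ → σ ⊆ ι)).erase ι)
      (S.powerset.filter (fun σ => ¬ β ⊆ σ)) := by
    have hβK : β ∈ (((ι ∪ ρ).powerset).filter (fun σ => ι.erase p ⊆ σ → σ ⊆ ι)).erase ι := by
      simp only [mem_erase, mem_filter, mem_powerset]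
      exact ⟨hβne, hβι.trans hιS, fun _ => hβι⟩
    refine ⟨β, ⟨?_, β, hβK, hβK, Subset.rfl, ?_⟩, ?_⟩
    · calc β.card ≤ ι.card := card_le_card hβι
        _ = d := hι
    · intro η hη hβη
      simp only [mem_erase, mem_filter, mem_powerset] at hη
      have hηι : η ⊆ ι := hη.2.2 hβη
      have hpη : p ∉ η := by
        intro hpη
        apply hη.1
        refine Subset.antisymm hηι (fun x hx => ?_)
        rcases eq_or_ne x p with rfl | hxp
        · exact hpη
        · exact hβη (mem_erase.mpr ⟨hxp, hx⟩)
      exact fun x hx => mem_erase.mpr ⟨fun h => hpη (h ▸ hx), hηι hx⟩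
    · unfold collapseAt
      ext σ
      simp only [mem_filter, mem_erase, mem_powerset]
      constructor
      · rintro ⟨h1, h2⟩
        exact ⟨⟨fun h => h2 (h ▸ hβι), h1, fun h => absurd h h2⟩, h2⟩
      · rintro ⟨⟨_, h1, _⟩, h3⟩
        exact ⟨h1, h3⟩
  exact Relation.ReflTransGen.head hstep
    (aux_collapse d S β (hβι.trans hιS) (by
      calc β.card ≤ ι.card := card_le_card hβι
        _ = d := hι))
end

section
/- Let K be a 2-collapsible simplicial complex with the property that all 2-collapsible faces of K are pairwise dependent, i.e., there is a single face τ of K such that τ = τ(σ) for every 2-collapsible face σ of K. If K contains a bad 2-collapsible face (one whose collapse yields a non-2-collapsible complex), then K ≠ 2^τ. (Equivalently: in the full simplex 2^τ every 2-collapsible face is good.) -/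
open Finset

variable {V : Type*} [DecidableEq V]

/-- A full simplex is `d`-collapsible: collapse at `∅`. -/
lemma powerset_dcoll (d : ℕ) (s : Finset V) : DCollapsible d s.powerset := by
  refine Relation.ReflTransGen.single ⟨∅, ⟨by simp, s, ?_⟩, ?_⟩
  · exact ⟨by simp, by simp, by simp, fun η hη _ => Finset.mem_powerset.mp hη⟩
  · ext η; simp [collapseAt]

/-- If all 2-collapsible faces of a 2-collapsible complex `K` share the same unique maximal
face `τ`, and `K` contains a bad 2-collapsible face, then `K` is not the full simplex
`2^τ`. -/
theorem stmt17 (K : Finset (Finset V)) (hK : IsComplex K) (hcoll : DCollapsible 2 K)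
    (τ : Finset V) (hτ : τ ∈ K)
    (hdep : ∀ σ τ' : Finset V, σ.card ≤ 2 → IsTau K σ τ' → τ' = τ)
    (hbad : ∃ σ : Finset V, DCollFace 2 K σ ∧ ¬ DCollapsible 2 (collapseAt K σ)) :
    K ≠ τ.powerset := by
  intro hKeq
  obtain ⟨σ, ⟨hcard, τ', hτ'⟩, hbadσ⟩ := hbad
  apply hbadσ
  subst hKeq
  have hσsub : σ ⊆ τ := Finset.mem_powerset.mp hτ'.1
  rcases (show σ.card = 0 ∨ σ.card = 1 ∨ σ.card = 2 by omega) with h | h | h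
  · -- σ = ∅ : collapse empties everything
    obtain rfl : σ = ∅ := Finset.card_eq_zero.mp h
    have : collapseAt τ.powerset (∅ : Finset V) = ∅ := by ext η; simp [collapseAt]
    rw [this]
    exact Relation.ReflTransGen.refl
  · -- σ = {a} : collapse yields powerset of τ \ {a}
    obtain ⟨a, rfl⟩ := Finset.card_eq_one.mp h
    have : collapseAt τ.powerset {a} = (τ \ {a}).powerset := by
      ext η; simp [collapseAt, Finset.subset_sdiff]
    rw [this]
    exact powerset_dcoll 2 _
  · -- σ = {a, b}
    obtain ⟨a, b, hab, rfl⟩ := Finset.card_eq_two.mp h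
    have ha : a ∈ τ := hσsub (by simp)
    have hb : b ∈ τ := hσsub (by simp)
    have key : collapseAt (collapseAt τ.powerset {a, b}) {a} = (τ \ {a}).powerset := by
      ext η
      simp only [collapseAt, Finset.mem_filter, Finset.mem_powerset,
        Finset.insert_subset_iff, Finset.singleton_subset_iff, Finset.subset_sdiff,
        Finset.disjoint_singleton_right]
      tauto
    refine Relation.ReflTransGen.head ⟨{a}, ⟨by simp, τ \ {b}, ?_, ?_, ?_, ?_⟩, rfl⟩
      (key ▸ powerset_dcoll 2 _)
    · -- {a} ∈ collapseAt τ.powerset {a,b}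
      simp only [collapseAt, Finset.mem_filter, Finset.mem_powerset,
        Finset.singleton_subset_iff, Finset.insert_subset_iff, Finset.mem_singleton]
      exact ⟨ha, fun h => hab h.2.symm⟩
    · -- τ \ {b} ∈ collapseAt τ.powerset {a,b}
      simp only [collapseAt, Finset.mem_filter, Finset.mem_powerset,
        Finset.insert_subset_iff, Finset.singleton_subset_iff, Finset.mem_sdiff,
        Finset.mem_singleton]
      exact ⟨Finset.sdiff_subset, by simp⟩
    · simp [Finset.singleton_subset_iff, ha, hab]
    · intro η hη haη
      simp only [collapseAt, Finset.mem_filter, Finset.mem_powerset,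
        Finset.insert_subset_iff] at hη
      have haη' : a ∈ η := Finset.singleton_subset_iff.mp haη
      have hbη : b ∉ η := fun hbη => hη.2 ⟨haη', Finset.singleton_subset_iff.mpr hbη⟩
      exact Finset.subset_sdiff.mpr ⟨hη.1, by simpa⟩
end

section
/- If K is a 1-collapsible simplicial complex and σ is a 1-collapsible face of K (a vertex or the empty face contained in a unique maximal face), then K_σ is 1-collapsible. -/
open Finset

variable {V : Type*} [DecidableEq V]

lemma complex_collapse (K : Finset (Finset V)) (hK : IsComplex K) (σ : Finset V) :
    IsComplex (collapseAt K σ) := by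
  intro η hη ζ hζ
  simp only [collapseAt, mem_filter] at hη ⊢
  exact ⟨hK η hη.1 ζ hζ, fun h => hη.2 (h.trans hζ)⟩

lemma collapse_comm (K : Finset (Finset V)) (σ σ' : Finset V) :
    collapseAt (collapseAt K σ) σ' = collapseAt (collapseAt K σ') σ := by
  simp only [collapseAt, Finset.filter_filter]
  exact Finset.filter_congr (fun η _ => by tauto)

lemma stmt19_aux (K : Finset (Finset V)) (h : CollapsesTo 1 K ∅) :
    IsComplex K → ∀ σ, DCollFace 1 K σ → DCollapsible 1 (collapseAt K σ) := by
  induction h using Relation.ReflTransGen.head_induction_on with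
  | refl =>
    intro _ σ hσ
    exact absurd hσ.2.choose_spec.1 (by simp)
  | @head K K₁ hstep htail ih =>
    intro hK σ hσ
    obtain ⟨hcard, τ, hτ⟩ := hσ
    rcases σ.eq_empty_or_nonempty with rfl | hne
    · -- collapsing at ∅ empties the complex
      have h1 : collapseAt K ∅ = ∅ := by simp [collapseAt]
      rw [h1]
      exact Relation.ReflTransGen.refl
    · obtain ⟨v, rfl⟩ := Finset.card_eq_one.mp (le_antisymm hcard hne.card_pos)
      obtain ⟨σ₁, ⟨hcard₁, τ₁, hτ₁⟩, rfl⟩ := hstep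
      rcases σ₁.eq_empty_or_nonempty with rfl | hne₁
      · -- the collapse step was at ∅, so τ₁ contains every face of K
        have hmem : ∅ ∈ collapseAt K {v} := by
          simp only [collapseAt, mem_filter, Finset.singleton_subset_iff,
            Finset.notMem_empty, not_false_iff, and_true]
          exact hK _ hτ.1 ∅ (Finset.empty_subset _)
        have hτmem : τ₁ \ {v} ∈ collapseAt K {v} := by
          simp only [collapseAt, mem_filter, Finset.singleton_subset_iff, Finset.mem_sdiff,
            Finset.mem_singleton]
          exact ⟨hK _ hτ₁.2.1 _ (Finset.sdiff_subset), by tauto⟩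
        have hempty : collapseAt (collapseAt K {v}) ∅ = ∅ := by simp [collapseAt]
        refine Relation.ReflTransGen.head
          ⟨∅, ⟨by simp, τ₁ \ {v}, hmem, hτmem, Finset.empty_subset _, ?_⟩, rfl⟩
          (hempty ▸ Relation.ReflTransGen.refl)
        intro η hη _
        simp only [collapseAt, mem_filter, Finset.singleton_subset_iff] at hη
        exact Finset.subset_sdiff.mpr ⟨hτ₁.2.2.2 η hη.1 (Finset.empty_subset _),
          by simp [Finset.disjoint_singleton_right, hη.2]⟩
      · obtain ⟨w, rfl⟩ := Finset.card_eq_one.mp (le_antisymm hcard₁ hne₁.card_pos)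
        by_cases hvw : w = v
        · subst hvw
          exact htail
        · -- main case: v ≠ w
          have hwv : ¬ ({v} : Finset V) ⊆ {w} := by
            simp only [Finset.singleton_subset_iff, Finset.mem_singleton]
            exact fun h => hvw h.symm
          have hvw' : ¬ ({w} : Finset V) ⊆ {v} := by
            simp only [Finset.singleton_subset_iff, Finset.mem_singleton]
            exact hvw
          -- {w} is a 1-collapsible face of collapseAt K {v}, with max face τ₁ \ {v}
          have hw_mem : ({w} : Finset V) ∈ collapseAt K {v} := by
            simp only [collapseAt, mem_filter]
            exact ⟨hτ₁.1, hwv⟩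
          have hτ₁' : τ₁ \ {v} ∈ collapseAt K {v} := by
            simp only [collapseAt, mem_filter, Finset.singleton_subset_iff, Finset.mem_sdiff,
              Finset.mem_singleton]
            exact ⟨hK _ hτ₁.2.1 _ Finset.sdiff_subset, by tauto⟩
          have hwτ₁ : ({w} : Finset V) ⊆ τ₁ \ {v} := by
            simp only [Finset.singleton_subset_iff, Finset.mem_sdiff, Finset.mem_singleton]
            exact ⟨hτ₁.2.2.1 (Finset.mem_singleton_self w), hvw⟩
          have hmax : ∀ η ∈ collapseAt K {v}, ({w} : Finset V) ⊆ η → η ⊆ τ₁ \ {v} := by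
            intro η hη hwη
            simp only [collapseAt, mem_filter, Finset.singleton_subset_iff] at hη
            exact Finset.subset_sdiff.mpr ⟨hτ₁.2.2.2 η hη.1 hwη,
              by simp [Finset.disjoint_singleton_right, hη.2]⟩
          have hdc : DCollFace 1 (collapseAt K {v}) {w} :=
            ⟨by simp, τ₁ \ {v}, hw_mem, hτ₁', hwτ₁, hmax⟩
          -- {v} is a 1-collapsible face of K₁ = collapseAt K {w}, with max face τ \ {w}
          have hv_mem : ({v} : Finset V) ∈ collapseAt K {w} := by
            simp only [collapseAt, mem_filter]
            exact ⟨hτ.1, hvw'⟩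
          have hτ' : τ \ {w} ∈ collapseAt K {w} := by
            simp only [collapseAt, mem_filter, Finset.singleton_subset_iff, Finset.mem_sdiff,
              Finset.mem_singleton]
            exact ⟨hK _ hτ.2.1 _ Finset.sdiff_subset, by tauto⟩
          have hvτ : ({v} : Finset V) ⊆ τ \ {w} := by
            simp only [Finset.singleton_subset_iff, Finset.mem_sdiff, Finset.mem_singleton]
            exact ⟨hτ.2.2.1 (Finset.mem_singleton_self v), fun h => hvw h.symm⟩
          have hmax' : ∀ η ∈ collapseAt K {w}, ({v} : Finset V) ⊆ η → η ⊆ τ \ {w} := by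
            intro η hη hvη
            simp only [collapseAt, mem_filter, Finset.singleton_subset_iff] at hη
            exact Finset.subset_sdiff.mpr ⟨hτ.2.2.2 η hη.1 hvη,
              by simp [Finset.disjoint_singleton_right, hη.2]⟩
          have hdc' : DCollFace 1 (collapseAt K {w}) {v} :=
            ⟨by simp, τ \ {w}, hv_mem, hτ', hvτ, hmax'⟩
          have hIH : DCollapsible 1 (collapseAt (collapseAt K {w}) {v}) :=
            ih (complex_collapse K hK {w}) {v} hdc'
          refine Relation.ReflTransGen.head ⟨{w}, hdc, rfl⟩ ?_
          rw [collapse_comm]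
          exact hIH

/-- Collapsing any 1-collapsible face of a 1-collapsible complex yields a 1-collapsible
complex. -/
theorem stmt19 (K : Finset (Finset V)) (hK : IsComplex K) (hcoll : DCollapsible 1 K)
    (σ : Finset V) (hσ : DCollFace 1 K σ) :
    DCollapsible 1 (collapseAt K σ) := by
  exact stmt19_aux K hcoll hK σ hσ
end
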